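/- Let h(κ) = ∫₀^π (1−κ²) / (4π (1+κ²−2κ cos θ)^{3/2}) dθ for κ ∈ [0,1). For every g ∈ [0,1), h is differentiable at g and 2π h'(g) = (1−g)^{−2} [ ∫₀^∞ (1+v²)^{−3/2} (1 + ((1−g)/(1+g))² v²)^{−1/2} dv − ((1−g)/(1+g))² ∫₀^∞ (1+v²)^{−3/2} (1 + ((1+g)/(1−g))² v²)^{−1/2} dv ]. -/

import Mathlib

open MeasureTheory Real Set

/-- The angular average of the three-dimensional Henyey–Greenstein phase function. -/
noncomputable def hgAverage3 (κ : ℝ) : ℝ :=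
  ∫ θ in Set.Ioo (0:ℝ) π, (1 - κ^2) / (4 * π * (1 + κ^2 - 2*κ*Real.cos θ) ^ ((3:ℝ)/2))

namespace HGaux


noncomputable def fI (c v : ℝ) : ℝ := (1 + v^2) ^ (-(3:ℝ)/2) * (1 + c^2 * v^2) ^ (-(1:ℝ)/2)
noncomputable def fG (c v : ℝ) : ℝ := (1 + v^2) ^ (-(3:ℝ)/2) * (1 + c^2 * v^2) ^ ((1:ℝ)/2)
noncomputable def fJ (c v : ℝ) : ℝ := (1 + v^2) ^ (-(3:ℝ)/2) * (v^2 * (1 + c^2 * v^2) ^ (-(1:ℝ)/2))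

noncomputable def II (c : ℝ) : ℝ := ∫ v in Ioi (0:ℝ), fI c v
noncomputable def GG (c : ℝ) : ℝ := ∫ v in Ioi (0:ℝ), fG c v
noncomputable def JJ (c : ℝ) : ℝ := ∫ v in Ioi (0:ℝ), fJ c v

lemma base1_pos (v : ℝ) : (0:ℝ) < 1 + v^2 := by positivity
lemma base2_pos (c v : ℝ) : (0:ℝ) < 1 + c^2 * v^2 := by positivity

lemma cont_fI (c : ℝ) : Continuous (fI c) := by
  apply Continuous.mul
  · exact (continuous_const.add (continuous_pow 2)).rpow_const
      (fun v => Or.inl (base1_pos v).ne')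
  · exact (continuous_const.add (continuous_const.mul (continuous_pow 2))).rpow_const
      (fun v => Or.inl (base2_pos c v).ne')

lemma cont_fG (c : ℝ) : Continuous (fG c) := by
  apply Continuous.mul
  · exact (continuous_const.add (continuous_pow 2)).rpow_const
      (fun v => Or.inl (base1_pos v).ne')
  · exact (continuous_const.add (continuous_const.mul (continuous_pow 2))).rpow_const
      (fun v => Or.inl (base2_pos c v).ne')

lemma cont_fJ (c : ℝ) : Continuous (fJ c) := by
  apply Continuous.mul
  · exact (continuous_const.add (continuous_pow 2)).rpow_const
      (fun v => Or.inl (base1_pos v).ne')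
  · exact (continuous_pow 2).mul
      ((continuous_const.add (continuous_const.mul (continuous_pow 2))).rpow_const
        (fun v => Or.inl (base2_pos c v).ne'))

lemma int_inv_one_add_sq : IntegrableOn (fun v : ℝ => (1 + v^2)⁻¹) (Ioi 0) :=
  integrable_inv_one_add_sq.integrableOn

lemma pow32_le (v : ℝ) : (1 + v^2) ^ (-(3:ℝ)/2) ≤ (1 + v^2)⁻¹ := by
  rw [← Real.rpow_neg_one]
  exact Real.rpow_le_rpow_of_exponent_le (by nlinarith [sq_nonneg v]) (by norm_num)

lemma integrableOn_fI (c : ℝ) : IntegrableOn (fI c) (Ioi 0) := by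
  apply Integrable.mono int_inv_one_add_sq ((cont_fI c).aestronglyMeasurable.restrict)
  refine Filter.Eventually.of_forall fun v => ?_
  have h1 : (0:ℝ) < 1 + v^2 := base1_pos v
  have hf : 0 < fI c v := by unfold fI; positivity
  rw [Real.norm_eq_abs, Real.norm_eq_abs, abs_of_pos hf,
    abs_of_pos (by positivity : (0:ℝ) < (1+v^2)⁻¹)]
  calc fI c v ≤ (1 + v^2) ^ (-(3:ℝ)/2) * 1 := by
        unfold fI
        exact mul_le_mul_of_nonneg_left
          (Real.rpow_le_one_of_one_le_of_nonpos (by nlinarith [sq_nonneg (c*v)]) (by norm_num))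
          (Real.rpow_nonneg h1.le _)
    _ ≤ (1 + v^2)⁻¹ := by rw [mul_one]; exact pow32_le v

lemma integrableOn_fG (c : ℝ) : IntegrableOn (fG c) (Ioi 0) := by
  apply Integrable.mono (int_inv_one_add_sq.const_mul ((1 + c^2) ^ ((1:ℝ)/2)))
    ((cont_fG c).aestronglyMeasurable.restrict)
  refine Filter.Eventually.of_forall fun v => ?_
  have h1 : (0:ℝ) < 1 + v^2 := base1_pos v
  have h2 : (0:ℝ) < 1 + c^2 * v^2 := base2_pos c v
  have hc : (0:ℝ) < 1 + c^2 := by positivity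
  have hf : 0 < fG c v := by unfold fG; positivity
  rw [Real.norm_eq_abs, Real.norm_eq_abs, abs_of_pos hf, abs_of_pos (by positivity)]
  have key : (1 + c^2 * v^2) ^ ((1:ℝ)/2) ≤ (1 + c^2) ^ ((1:ℝ)/2) * (1 + v^2) ^ ((1:ℝ)/2) := by
    rw [← Real.mul_rpow hc.le h1.le]
    exact Real.rpow_le_rpow h2.le (by nlinarith [sq_nonneg c, sq_nonneg v]) (by norm_num)
  calc fG c v ≤ (1 + v^2) ^ (-(3:ℝ)/2) * ((1 + c^2) ^ ((1:ℝ)/2) * (1 + v^2) ^ ((1:ℝ)/2)) :=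
        mul_le_mul_of_nonneg_left key (Real.rpow_nonneg h1.le _)
    _ = (1 + c^2) ^ ((1:ℝ)/2) * (1 + v^2) ^ (-(3:ℝ)/2 + (1:ℝ)/2) := by
        rw [Real.rpow_add h1]; ring
    _ = (1 + c^2) ^ ((1:ℝ)/2) * (1 + v^2)⁻¹ := by
        norm_num [Real.rpow_neg_one]

lemma integrableOn_fJ {c : ℝ} (hc : 0 < c) : IntegrableOn (fJ c) (Ioi 0) := by
  apply Integrable.mono (int_inv_one_add_sq.const_mul c⁻¹)
    ((cont_fJ c).aestronglyMeasurable.restrict)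
  rw [ae_restrict_iff' measurableSet_Ioi]
  refine Filter.Eventually.of_forall fun v hv => ?_
  have hv0 : (0:ℝ) < v := hv
  have h1 : (0:ℝ) < 1 + v^2 := base1_pos v
  have h2 : (0:ℝ) < 1 + c^2 * v^2 := base2_pos c v
  have hf : 0 < fJ c v := by unfold fJ; positivity
  rw [Real.norm_eq_abs, Real.norm_eq_abs, abs_of_pos hf, abs_of_pos (by positivity)]
  have key1 : (1 + c^2 * v^2) ^ (-(1:ℝ)/2) ≤ (c * v)⁻¹ := by
    have h3 : (0:ℝ) < c^2 * v^2 := by positivity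
    have h4 : (1 + c^2 * v^2) ^ (-(1:ℝ)/2) ≤ (c^2 * v^2) ^ (-(1:ℝ)/2) :=
      Real.rpow_le_rpow_of_nonpos h3 (by linarith) (by norm_num)
    refine h4.trans_eq ?_
    rw [show c^2*v^2 = (c*v)^2 by ring, ← Real.rpow_natCast (c*v) 2,
      ← Real.rpow_mul (by positivity : (0:ℝ) ≤ c*v)]
    norm_num [Real.rpow_neg_one]
  have key2 : v ≤ (1 + v^2) ^ ((1:ℝ)/2) := by
    calc v = (v^2) ^ ((1:ℝ)/2) := by
          rw [← Real.rpow_natCast v 2, ← Real.rpow_mul hv0.le]; norm_num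
      _ ≤ (1 + v^2) ^ ((1:ℝ)/2) :=
          Real.rpow_le_rpow (by positivity) (by linarith) (by norm_num)
  calc fJ c v ≤ (1 + v^2) ^ (-(3:ℝ)/2) * (v^2 * (c * v)⁻¹) := by
        unfold fJ
        refine mul_le_mul_of_nonneg_left ?_ (Real.rpow_nonneg h1.le _)
        exact mul_le_mul_of_nonneg_left key1 (by positivity)
    _ = c⁻¹ * (v * (1 + v^2) ^ (-(3:ℝ)/2)) := by
        rw [mul_inv]; field_simp
    _ ≤ c⁻¹ * ((1 + v^2) ^ ((1:ℝ)/2) * (1 + v^2) ^ (-(3:ℝ)/2)) := by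
        refine mul_le_mul_of_nonneg_left ?_ (by positivity)
        exact mul_le_mul_of_nonneg_right key2 (Real.rpow_nonneg h1.le _)
    _ = c⁻¹ * (1 + v^2) ^ ((1:ℝ)/2 + -(3:ℝ)/2) := by rw [Real.rpow_add h1]
    _ = c⁻¹ * (1 + v^2)⁻¹ := by norm_num [Real.rpow_neg_one]

lemma fG_split (c v : ℝ) : fG c v = fI c v + c^2 * fJ c v := by
  unfold fG fI fJ
  have h2 : (0:ℝ) < 1 + c^2 * v^2 := base2_pos c v
  have key : (1 + c^2*v^2) ^ ((1:ℝ)/2)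
      = (1 + c^2*v^2) * (1 + c^2*v^2) ^ (-(1:ℝ)/2) := by
    calc (1 + c^2*v^2) ^ ((1:ℝ)/2) = (1 + c^2*v^2) ^ ((1:ℝ) + -(1:ℝ)/2) := by norm_num
      _ = (1 + c^2*v^2) ^ (1:ℝ) * (1 + c^2*v^2) ^ (-(1:ℝ)/2) := Real.rpow_add h2 _ _
      _ = (1 + c^2*v^2) * (1 + c^2*v^2) ^ (-(1:ℝ)/2) := by rw [Real.rpow_one]
  rw [key]; ring

lemma GG_eq {c : ℝ} (hc : 0 < c) : GG c = II c + c^2 * JJ c := by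
  unfold GG II JJ
  rw [← integral_const_mul,
    ← MeasureTheory.integral_add (integrableOn_fI c) ((integrableOn_fJ hc).const_mul _)]
  exact setIntegral_congr_fun measurableSet_Ioi (fun v _ => fG_split c v)

lemma II_inv {c : ℝ} (hc : 0 < c) :
    II c⁻¹ = c * ∫ x in Ioi (0:ℝ), (1 + c^2*x^2) ^ (-(3:ℝ)/2) * (1 + x^2) ^ (-(1:ℝ)/2) := by
  have key := integral_comp_mul_left_Ioi (fun v => fI c⁻¹ v) 0 hc
  rw [mul_zero] at key
  have : II c⁻¹ = c * ∫ x in Ioi (0:ℝ), fI c⁻¹ (c * x) := by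
    rw [key, smul_eq_mul, ← mul_assoc, mul_inv_cancel₀ hc.ne', one_mul]; rfl
  rw [this]
  congr 1
  refine setIntegral_congr_fun measurableSet_Ioi (fun x hx => ?_)
  unfold fI
  have a1 : (1:ℝ) + (c*x)^2 = 1 + c^2*x^2 := by ring
  have a2 : (1:ℝ) + (c⁻¹)^2*(c*x)^2 = 1 + x^2 := by
    field_simp
  rw [a1, a2]

lemma JJ_eq {c : ℝ} (hc : 0 < c) :
    JJ c = ∫ x in Ioi (0:ℝ), (1 + c^2*x^2) ^ (-(3:ℝ)/2) * (1 + x^2) ^ (-(1:ℝ)/2) := by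
  have himg : (fun x : ℝ => c⁻¹ * x⁻¹) '' (Ioi 0) = Ioi 0 := by
    ext y; simp only [mem_image, mem_Ioi]
    constructor
    · rintro ⟨x, hx, rfl⟩; positivity
    · intro hy; exact ⟨c⁻¹ * y⁻¹, by positivity, by field_simp⟩
  have hderiv : ∀ x ∈ Ioi (0:ℝ), HasDerivWithinAt (fun x : ℝ => c⁻¹ * x⁻¹)
      (c⁻¹ * (-(x^2)⁻¹)) (Ioi 0) x := by
    intro x hx
    exact ((hasDerivAt_inv (ne_of_gt hx)).const_mul c⁻¹).hasDerivWithinAt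
  have hinj : InjOn (fun x : ℝ => c⁻¹ * x⁻¹) (Ioi 0) := by
    intro a ha b hb hab
    simp only at hab
    have ha' : (a:ℝ) ≠ 0 := ne_of_gt ha
    have hb' : (b:ℝ) ≠ 0 := ne_of_gt hb
    field_simp at hab
    exact hab.symm
  have := integral_image_eq_integral_abs_deriv_smul measurableSet_Ioi hderiv hinj (fJ c)
  rw [himg] at this
  unfold JJ
  rw [this]
  refine setIntegral_congr_fun measurableSet_Ioi (fun x hx => ?_)
  have hx0 : (0:ℝ) < x := hx
  have hcx : (0:ℝ) < c * x := by positivity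
  have h1 : (0:ℝ) < 1 + c^2*x^2 := base2_pos c x
  have h2 : (0:ℝ) < 1 + x^2 := base1_pos x
  have E1 : ((1:ℝ) + (c⁻¹*x⁻¹)^2) ^ (-(3:ℝ)/2)
      = (1 + c^2*x^2) ^ (-(3:ℝ)/2) * (c*x)^3 := by
    have e : (1:ℝ) + (c⁻¹*x⁻¹)^2 = (1 + c^2*x^2) / (c*x)^2 := by
      field_simp; ring
    rw [e, Real.div_rpow h1.le (by positivity)]
    have e2 : ((c*x)^2 : ℝ) ^ (-(3:ℝ)/2) = ((c*x)^3)⁻¹ := by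
      rw [← Real.rpow_natCast (c*x) 2, ← Real.rpow_mul hcx.le]
      norm_num
    rw [e2, div_eq_mul_inv, inv_inv]
  have E2 : ((1:ℝ) + c^2*(c⁻¹*x⁻¹)^2) ^ (-(1:ℝ)/2)
      = (1 + x^2) ^ (-(1:ℝ)/2) * x := by
    have e : (1:ℝ) + c^2*(c⁻¹*x⁻¹)^2 = (1 + x^2) / x^2 := by
      field_simp; ring
    rw [e, Real.div_rpow h2.le (by positivity)]
    have e2 : (x^2 : ℝ) ^ (-(1:ℝ)/2) = x⁻¹ := by
      rw [← Real.rpow_natCast x 2, ← Real.rpow_mul hx0.le]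
      norm_num
      rw [Real.rpow_neg_one]
    rw [e2, div_eq_mul_inv, inv_inv]
  show |c⁻¹ * (-(x^2)⁻¹)| • fJ c (c⁻¹ * x⁻¹) = _
  unfold fJ
  rw [E1, E2, abs_mul, abs_neg, abs_inv, abs_inv, abs_of_pos hc, abs_of_pos (by positivity : (0:ℝ) < x^2)]
  rw [smul_eq_mul]
  field_simp
noncomputable def fG' (c v : ℝ) : ℝ :=
  (1 + v^2) ^ (-(3:ℝ)/2) * (c * (v^2 * (1 + c^2 * v^2) ^ (-(1:ℝ)/2)))

lemma cont_fG' (c : ℝ) : Continuous (fG' c) := by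
  apply Continuous.mul
  · exact (continuous_const.add (continuous_pow 2)).rpow_const
      (fun v => Or.inl (base1_pos v).ne')
  · exact continuous_const.mul ((continuous_pow 2).mul
      ((continuous_const.add (continuous_const.mul (continuous_pow 2))).rpow_const
        (fun v => Or.inl (base2_pos c v).ne')))

lemma hasDerivAt_fG (c v : ℝ) : HasDerivAt (fun c => fG c v) (fG' c v) c := by
  have hu : HasDerivAt (fun c : ℝ => 1 + c^2 * v^2) (2*c*v^2) c := by
    simpa using ((hasDerivAt_pow 2 c).mul_const (v^2)).const_add 1
  have hrp : HasDerivAt (fun y : ℝ => y ^ ((1:ℝ)/2))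
      ((1:ℝ)/2 * (1 + c^2*v^2) ^ ((1:ℝ)/2 - 1)) (1 + c^2*v^2) :=
    Real.hasDerivAt_rpow_const (Or.inl (base2_pos c v).ne')
  have hcomp := (hrp.comp c hu).const_mul ((1 + v^2) ^ (-(3:ℝ)/2))
  have heq : (fun c => fG c v)
      = fun c => (1 + v^2) ^ (-(3:ℝ)/2) * ((fun y : ℝ => y ^ ((1:ℝ)/2)) ((fun c : ℝ => 1 + c^2 * v^2) c)) := rfl
  rw [heq]
  refine hcomp.congr_deriv ?_
  rw [show ((1:ℝ)/2 - 1) = -(1:ℝ)/2 by norm_num]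
  unfold fG'
  ring

lemma hasDerivAt_GG {c₀ : ℝ} (hc : 0 < c₀) : HasDerivAt GG (c₀ * JJ c₀) c₀ := by
  have hεpos : (0:ℝ) < c₀/2 := by linarith
  have key := hasDerivAt_integral_of_dominated_loc_of_deriv_le
    (μ := volume.restrict (Ioi (0:ℝ))) (x₀ := c₀) (s := Metric.ball c₀ (c₀/2))
    (F := fun c v => fG c v) (F' := fun c v => fG' c v)
    (bound := fun v => (2*c₀) * fJ (c₀/2) v)
    (Metric.ball_mem_nhds c₀ hεpos)
    (Filter.Eventually.of_forall fun c => (cont_fG c).aestronglyMeasurable.restrict)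
    (integrableOn_fG c₀)
    ((cont_fG' c₀).aestronglyMeasurable.restrict)
    ?_ ((integrableOn_fJ hεpos).const_mul _)
    (Filter.Eventually.of_forall fun v => fun c _ => hasDerivAt_fG c v)
  · have e : (∫ v in Ioi (0:ℝ), fG' c₀ v) = c₀ * JJ c₀ := by
      unfold JJ
      rw [← integral_const_mul]
      refine setIntegral_congr_fun measurableSet_Ioi (fun v _ => ?_)
      unfold fG' fJ; ring
    exact e ▸ key.2
  · refine Filter.Eventually.of_forall fun v => fun c hcball => ?_
    have hcl : c₀/2 < c ∧ c < 2*c₀ := by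
      rw [Metric.mem_ball, Real.dist_eq, abs_lt] at hcball
      constructor <;> linarith [hcball.1, hcball.2]
    have hcpos : 0 < c := lt_trans hεpos hcl.1
    have h1 : (0:ℝ) < 1 + v^2 := base1_pos v
    have h2 : (0:ℝ) < 1 + c^2*v^2 := base2_pos c v
    have hmono : (1 + c^2*v^2) ^ (-(1:ℝ)/2) ≤ (1 + (c₀/2)^2*v^2) ^ (-(1:ℝ)/2) := by
      apply Real.rpow_le_rpow_of_nonpos (base2_pos (c₀/2) v)
      · have : (c₀/2)^2 ≤ c^2 := by nlinarith [hcl.1, hεpos]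
        nlinarith [sq_nonneg v]
      · norm_num
    have : fG' c v ≤ (2*c₀) * fJ (c₀/2) v := by
      unfold fG' fJ
      calc (1 + v^2) ^ (-(3:ℝ)/2) * (c * (v^2 * (1 + c^2*v^2) ^ (-(1:ℝ)/2)))
          ≤ (1 + v^2) ^ (-(3:ℝ)/2) * ((2*c₀) * (v^2 * (1 + (c₀/2)^2*v^2) ^ (-(1:ℝ)/2))) := by
            apply mul_le_mul_of_nonneg_left _ (Real.rpow_nonneg h1.le _)
            apply mul_le_mul hcl.2.le
              (mul_le_mul_of_nonneg_left hmono (sq_nonneg v))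
              (by positivity) (by positivity)
        _ = (2*c₀) * ((1 + v^2) ^ (-(3:ℝ)/2) * (v^2 * (1 + (c₀/2)^2*v^2) ^ (-(1:ℝ)/2))) := by ring
    rw [Real.norm_eq_abs, abs_of_nonneg (by unfold fG'; positivity)]
    exact this
lemma hg_eq {κ : ℝ} (hκ : κ ∈ Ioo (-1:ℝ) 1) :
    hgAverage3 κ = (2*π*(1-κ))⁻¹ * GG ((1-κ)/(1+κ)) := by
  obtain ⟨hκ1', hκ2'⟩ := hκ
  have hκ1 : (0:ℝ) < 1 + κ := by linarith
  have hκ2 : (0:ℝ) < 1 - κ := by linarith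
  set c : ℝ := (1-κ)/(1+κ) with hcdef
  have hc : 0 < c := by positivity
  set φ : ℝ → ℝ := fun s => 2 * arctan (c * s) with hφdef
  have hderiv : ∀ s ∈ Ioi (0:ℝ), HasDerivWithinAt φ (2 * (1/(1+(c*s)^2) * c)) (Ioi 0) s := by
    intro s _
    have h1 : HasDerivAt (fun s : ℝ => c * s) c s := by
      simpa using (hasDerivAt_id s).const_mul c
    exact (((Real.hasDerivAt_arctan (c*s)).comp s h1).const_mul 2).hasDerivWithinAt
  have hinj : InjOn φ (Ioi 0) := by
    intro a _ b _ hab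
    have : arctan (c*a) = arctan (c*b) := by
      simp only [hφdef] at hab; linarith
    have := Real.arctan_injective this
    field_simp at this
    exact this
  have himg : φ '' (Ioi 0) = Ioo 0 π := by
    ext θ
    simp only [mem_image, mem_Ioi, mem_Ioo, hφdef]
    constructor
    · rintro ⟨s, hs, rfl⟩
      have hx : 0 < c * s := by positivity
      have h1 : 0 < arctan (c*s) := by
        have := Real.arctan_strictMono hx
        rwa [Real.arctan_zero] at this
      have h2 : arctan (c*s) < π/2 := Real.arctan_lt_pi_div_two _
      constructor <;> linarith
    · rintro ⟨h1, h2⟩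
      have hθ2 : 0 < θ/2 ∧ θ/2 < π/2 := ⟨by linarith, by linarith⟩
      have htan : 0 < Real.tan (θ/2) :=
        Real.tan_pos_of_pos_of_lt_pi_div_two hθ2.1 hθ2.2
      refine ⟨Real.tan (θ/2) / c, by positivity, ?_⟩
      have : c * (Real.tan (θ/2) / c) = Real.tan (θ/2) := by field_simp
      rw [this, Real.arctan_tan (by linarith [hθ2.1, Real.pi_pos]) hθ2.2]
      ring
  unfold hgAverage3
  rw [← himg, integral_image_eq_integral_abs_deriv_smul measurableSet_Ioi hderiv hinj]
  unfold GG
  rw [← integral_const_mul]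
  refine setIntegral_congr_fun measurableSet_Ioi (fun s hs => ?_)
  have hs0 : (0:ℝ) < s := hs
  have h1 : (0:ℝ) < 1 + s^2 := base1_pos s
  have h2 : (0:ℝ) < 1 + c^2*s^2 := base2_pos c s
  have hcs2 : ((c*s):ℝ)^2 = c^2*s^2 := by ring
  have hcos : Real.cos (2 * arctan (c*s)) = (1 - c^2*s^2)/(1 + c^2*s^2) := by
    rw [Real.cos_two_mul, Real.cos_sq_arctan, hcs2]
    field_simp
    ring
  have hA : 1 + κ^2 - 2*κ*Real.cos (2 * arctan (c*s))
      = ((1-κ)^2 * (1+s^2)) / (1 + c^2*s^2) := by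
    rw [hcos, hcdef]
    have hden : ((1:ℝ)+κ)^2 ≠ 0 := by positivity
    field_simp
    ring
  have hA32 : (1 + κ^2 - 2*κ*Real.cos (2 * arctan (c*s))) ^ ((3:ℝ)/2)
      = (1-κ)^3 * ((1+s^2) ^ ((3:ℝ)/2) / (1 + c^2*s^2) ^ ((3:ℝ)/2)) := by
    rw [hA, Real.div_rpow (by positivity) h2.le,
      Real.mul_rpow (by positivity) h1.le]
    have e1 : (((1-κ)^2 : ℝ)) ^ ((3:ℝ)/2) = (1-κ)^3 := by
      rw [← Real.rpow_natCast (1-κ) 2, ← Real.rpow_mul hκ2.le]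
      norm_num
    rw [e1]
    ring
  rw [smul_eq_mul, hA32]
  unfold fG
  have eP : ((1:ℝ)+s^2) ^ (-(3:ℝ)/2) = ((1+s^2) ^ ((3:ℝ)/2))⁻¹ := by
    rw [show (-(3:ℝ)/2) = -((3:ℝ)/2) by norm_num, Real.rpow_neg h1.le]
  have eQ : ((1:ℝ)+c^2*s^2) ^ ((3:ℝ)/2)
      = (1+c^2*s^2) * (1+c^2*s^2) ^ ((1:ℝ)/2) := by
    calc ((1:ℝ)+c^2*s^2) ^ ((3:ℝ)/2) = (1+c^2*s^2) ^ ((1:ℝ) + (1:ℝ)/2) := by norm_num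
      _ = (1+c^2*s^2) ^ (1:ℝ) * (1+c^2*s^2) ^ ((1:ℝ)/2) := Real.rpow_add h2 _ _
      _ = (1+c^2*s^2) * (1+c^2*s^2) ^ ((1:ℝ)/2) := by rw [Real.rpow_one]
  rw [eP, eQ, hcs2]
  have hPpos : (0:ℝ) < (1+s^2) ^ ((3:ℝ)/2) := Real.rpow_pos_of_pos h1 _
  have hQpos : (0:ℝ) < (1+c^2*s^2) ^ ((1:ℝ)/2) := Real.rpow_pos_of_pos h2 _
  have habs : |2 * (1/(1+c^2*s^2) * c)| = 2 * (1/(1+c^2*s^2) * c) := by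
    apply abs_of_pos; positivity
  rw [habs, hcdef]
  have hπ : (0:ℝ) < π := Real.pi_pos
  field_simp
  ring

lemma c_JJ {c : ℝ} (hc : 0 < c) : c * JJ c = II c⁻¹ := by
  rw [JJ_eq hc, II_inv hc]

end HGaux

open HGaux in
/-- For every `g ∈ [0,1)`, `h` is differentiable at `g` and
`2π h'(g) = (1−g)⁻² [∫₀^∞ (1+v²)^{−3/2}(1+((1−g)/(1+g))²v²)^{−1/2} dv −
((1−g)/(1+g))² ∫₀^∞ (1+v²)^{−3/2}(1+((1+g)/(1−g))²v²)^{−1/2} dv]`. -/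
theorem hgAverage3_hasDeriv (g : ℝ) (hg : g ∈ Set.Ico (0:ℝ) 1) :
    DifferentiableAt ℝ hgAverage3 g ∧
    2 * π * deriv hgAverage3 g =
      ((1 - g)^2)⁻¹ *
        ((∫ v in Set.Ioi (0:ℝ),
            (1 + v^2) ^ (-(3:ℝ)/2) * (1 + ((1-g)/(1+g))^2 * v^2) ^ (-(1:ℝ)/2)) -
          ((1-g)/(1+g))^2 *
            ∫ v in Set.Ioi (0:ℝ),
              (1 + v^2) ^ (-(3:ℝ)/2) * (1 + ((1+g)/(1-g))^2 * v^2) ^ (-(1:ℝ)/2)) := by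
  obtain ⟨hg0, hg1⟩ := hg
  have h1g : (0:ℝ) < 1 + g := by linarith
  have h2g : (0:ℝ) < 1 - g := by linarith
  have hπ : (0:ℝ) < π := Real.pi_pos
  have hc0 : 0 < (1-g)/(1+g) := by positivity
  have hnum : HasDerivAt (fun κ : ℝ => 1 - κ) (-1) g := by
    simpa using (hasDerivAt_id g).const_sub 1
  have hden : HasDerivAt (fun κ : ℝ => 1 + κ) 1 g := by
    simpa using ((hasDerivAt_id g).const_add 1)
  have hcmap : HasDerivAt (fun κ : ℝ => (1-κ)/(1+κ)) (-2/(1+g)^2) g := by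
    have := hnum.div hden h1g.ne'
    refine this.congr_deriv ?_
    field_simp
    ring
  have hGG : HasDerivAt GG (((1-g)/(1+g)) * JJ ((1-g)/(1+g))) ((1-g)/(1+g)) :=
    hasDerivAt_GG hc0
  have hcomp : HasDerivAt (GG ∘ fun κ : ℝ => (1-κ)/(1+κ))
      ((((1-g)/(1+g)) * JJ ((1-g)/(1+g))) * (-2/(1+g)^2)) g :=
    hGG.comp g hcmap
  have hinvmul : HasDerivAt (fun κ : ℝ => 2*π*(1-κ)) (-(2*π)) g := by
    have := hnum.const_mul (2*π)
    refine this.congr_deriv ?_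
    ring
  have hinv : HasDerivAt (fun κ : ℝ => (2*π*(1-κ))⁻¹) (2*π/(2*π*(1-g))^2) g := by
    have hne : 2*π*(1-g) ≠ 0 := by positivity
    have := hinvmul.inv hne
    refine this.congr_deriv ?_
    field_simp
  have hF := hinv.mul hcomp
  have hEv : hgAverage3 =ᶠ[nhds g]
      fun κ => (2*π*(1-κ))⁻¹ * (GG ∘ fun κ : ℝ => (1-κ)/(1+κ)) κ := by
    filter_upwards [isOpen_Ioo.mem_nhds (show g ∈ Ioo (-1:ℝ) 1 by
      constructor <;> linarith)] with κ hκ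
    exact hg_eq hκ
  have hD := hF.congr_of_eventuallyEq hEv
  refine ⟨hD.differentiableAt, ?_⟩
  rw [hD.deriv]
  have eI1 : (∫ v in Set.Ioi (0:ℝ),
      (1 + v^2) ^ (-(3:ℝ)/2) * (1 + ((1-g)/(1+g))^2 * v^2) ^ (-(1:ℝ)/2))
      = II ((1-g)/(1+g)) := rfl
  have eI2 : (∫ v in Set.Ioi (0:ℝ),
      (1 + v^2) ^ (-(3:ℝ)/2) * (1 + ((1+g)/(1-g))^2 * v^2) ^ (-(1:ℝ)/2))
      = II ((1-g)/(1+g))⁻¹ := by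
    rw [inv_div]
    rfl
  rw [eI1, eI2, ← c_JJ hc0, Function.comp_apply, GG_eq hc0]
  set A := II ((1-g)/(1+g)) with hA
  set B := JJ ((1-g)/(1+g)) with hB
  field_simp
  ring
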